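/- arXiv:1412.3680 — 2 statements merged into one kernel-verified Lean document; each statement's English description precedes it below -/
import Mathlib

section
/- Let ψ ∈ ℂ^n be a unit vector, σ1 := ψψ* (a pure state), σ0 an n×n density matrix, p0, p1 probability vectors on a finite set X, and fix s0 ∈ (0,1). Let γ := tr σ̃0, where σ̃0 is the generalized Schur complement of σ0 with respect to the projection π := ψψ*. Then a classical-to-quantum channel Γ with Γ(p0) = σ0 and Γ(p1) = σ1 exists if and only if Σ_{x : p1(x)>0} p0(x)^s · p1(x)^{1−s} ≤ γ^s holds for every s ∈ (s0, 1). -/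
open Matrix
open scoped Kronecker ComplexOrder

noncomputable section

/-- A probability vector on a finite set. -/
def ProbVec {X : Type*} [Fintype X] (p : X → ℝ) : Prop :=
  (∀ x, 0 ≤ p x) ∧ ∑ x, p x = 1

/-- A density matrix: positive semidefinite with trace one. -/
def IsDensityMatrix {n : ℕ} (ρ : Matrix (Fin n) (Fin n) ℂ) : Prop :=
  ρ.PosSemidef ∧ ρ.trace = 1

/-- The action of a classical-to-quantum channel, given by a family of density
matrices `ρ`, on a probability vector `p`. -/
def cqApply {X : Type*} [Fintype X] {n : ℕ} (ρ : X → Matrix (Fin n) (Fin n) ℂ)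
    (p : X → ℝ) : Matrix (Fin n) (Fin n) ℂ :=
  ∑ x, (p x : ℂ) • ρ x

/-- The recession slope `lim_{λ → ∞} f(λ)/λ`, as an extended real number.
(For convex continuous `f` the limit exists and equals this limsup.) -/
def recessionSlope (f : ℝ → ℝ) : EReal :=
  Filter.limsup (fun lam : ℝ => ((f lam / lam : ℝ) : EReal)) Filter.atTop

/-- The `f`-divergence of two probability vectors, valued in `ℝ ∪ {+∞}`
(with the convention `0 * ∞ = 0`, which holds for `EReal` multiplication). -/
def fDiv {X : Type*} [Fintype X] (f : ℝ → ℝ) (p0 p1 : X → ℝ) : EReal :=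
  ((∑ x, if 0 < p1 x then p1 x * f (p0 x / p1 x) else 0 : ℝ) : EReal)
    + ((∑ x, if 0 < p1 x then 0 else p0 x : ℝ) : EReal) * recessionSlope f

/-- The maximal `f`-divergence: the infimum of `D_f(q0‖q1)` over all classical
families mapped onto `(σ0, σ1)` by some classical-to-quantum channel. -/
def DfMax {n : ℕ} (f : ℝ → ℝ) (σ0 σ1 : Matrix (Fin n) (Fin n) ℂ) : EReal :=
  sInf { d : EReal |
    ∃ (m : ℕ) (q0 q1 : Fin m → ℝ) (ρ : Fin m → Matrix (Fin n) (Fin n) ℂ),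
      ProbVec q0 ∧ ProbVec q1 ∧ (∀ x, IsDensityMatrix (ρ x)) ∧
      cqApply ρ q0 = σ0 ∧ cqApply ρ q1 = σ1 ∧ d = fDiv f q0 q1 }

/-- Spectral functional calculus for Hermitian matrices (junk value `0` on
non-Hermitian input). -/
def hermCFC {n : ℕ} (f : ℝ → ℝ) (A : Matrix (Fin n) (Fin n) ℂ) :
    Matrix (Fin n) (Fin n) ℂ :=
  if hA : A.IsHermitian then
    (hA.eigenvectorUnitary : Matrix (Fin n) (Fin n) ℂ) *
      Matrix.diagonal (fun i => (f (hA.eigenvalues i) : ℂ)) *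
      (star (hA.eigenvectorUnitary : Matrix (Fin n) (Fin n) ℂ))
  else 0

/-- Spectral pseudo-inverse: invert the nonzero eigenvalues. -/
def pinvMat {n : ℕ} (A : Matrix (Fin n) (Fin n) ℂ) : Matrix (Fin n) (Fin n) ℂ :=
  hermCFC (fun x => if x = 0 then 0 else x⁻¹) A

/-- Orthogonal projection onto the range of a Hermitian matrix
(spectral projection onto the nonzero eigenvalues). -/
def rangeProj {n : ℕ} (A : Matrix (Fin n) (Fin n) ℂ) : Matrix (Fin n) (Fin n) ℂ :=
  hermCFC (fun x => if x = 0 then 0 else 1) A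

/-- `A ↦ (A⁺)^{1/2}`, the square root of the spectral pseudo-inverse. -/
def invSqrtMat {n : ℕ} (A : Matrix (Fin n) (Fin n) ℂ) : Matrix (Fin n) (Fin n) ℂ :=
  hermCFC (fun x => if x = 0 then 0 else (Real.sqrt x)⁻¹) A

/-- Generalized Schur complement of `σ0` with respect to a projection `π`:
`π σ0 π − π σ0 (1−π) · ((1−π) σ0 (1−π))⁺ · (1−π) σ0 π`. -/
def schurCompl {n : ℕ} (σ0 π : Matrix (Fin n) (Fin n) ℂ) :
    Matrix (Fin n) (Fin n) ℂ :=
  π * σ0 * π -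
    (π * σ0 * (1 - π)) * pinvMat ((1 - π) * σ0 * (1 - π)) * ((1 - π) * σ0 * π)

/-- `σ̃0`: the generalized Schur complement of `σ0` with respect to the
projection onto the range of `σ1`. -/
def sigmaTilde {n : ℕ} (σ0 σ1 : Matrix (Fin n) (Fin n) ℂ) :
    Matrix (Fin n) (Fin n) ℂ :=
  schurCompl σ0 (rangeProj σ1)

/-- The closed-form expression
`F_f(σ0,σ1) = tr σ1 f(σ1^{-1/2} σ̃0 σ1^{-1/2}) + (1 − tr σ̃0) L(f)`. -/
def Ff {n : ℕ} (f : ℝ → ℝ) (σ0 σ1 : Matrix (Fin n) (Fin n) ℂ) : EReal :=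
  (((σ1 * hermCFC f (invSqrtMat σ1 * sigmaTilde σ0 σ1 * invSqrtMat σ1)).trace.re : ℝ) : EReal)
    + ((1 - (sigmaTilde σ0 σ1).trace.re : ℝ) : EReal) * recessionSlope f

/-- Operator convexity of a function on `[0,∞)`, via the spectral functional
calculus on positive semidefinite complex matrices. -/
def OperatorConvex (f : ℝ → ℝ) : Prop :=
  ∀ (n : ℕ) (A B : Matrix (Fin n) (Fin n) ℂ), A.PosSemidef → B.PosSemidef →
    ∀ t : ℝ, 0 ≤ t → t ≤ 1 →
      (t • hermCFC f A + (1 - t) • hermCFC f B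
        - hermCFC f (t • A + (1 - t) • B)).PosSemidef

/-- A CPTP map between matrix algebras: trace preserving and with positive
semidefinite Choi matrix. -/
def IsCPTP {n k : ℕ}
    (Λ : Matrix (Fin n) (Fin n) ℂ →ₗ[ℂ] Matrix (Fin k) (Fin k) ℂ) : Prop :=
  (∀ A, (Λ A).trace = A.trace) ∧
    (∑ i : Fin n, ∑ j : Fin n,
      (Λ (Matrix.single i j 1)) ⊗ₖ (Matrix.single i j (1 : ℂ))).PosSemidef

/-- The largest eigenvalue of a Hermitian matrix (junk value `0` otherwise). -/
def lmax {k : ℕ} (W : Matrix (Fin k) (Fin k) ℂ) : ℝ :=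
  if h : W.IsHermitian then ⨆ i, h.eigenvalues i else 0

/-- A stochastic matrix (`P y x` is the probability of `y` given `x`). -/
def IsStochastic {X Y : Type*} [Fintype X] [Fintype Y] (P : Y → X → ℝ) : Prop :=
  (∀ y x, 0 ≤ P y x) ∧ ∀ x, ∑ y, P y x = 1

/-- The action of a stochastic matrix on a probability vector. -/
def stocApply {X Y : Type*} [Fintype X] [Fintype Y] (P : Y → X → ℝ)
    (p : X → ℝ) : Y → ℝ :=
  fun y => ∑ x, P y x * p x

end

section CQToolkit

open Matrix
open scoped ComplexOrder

variable {n : ℕ}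


/-!
Write `π = ψψ*`, `a = Σ_{p1(x)>0} p0(x)` and `γ = tr σ̃0`. A channel with `Γ(p1) = π` must send
every `x` in the support of `p1` to the pure state `π`, so a channel exists iff `σ0 - a π ≥ 0`,
the remaining mass `1 - a` being carried by the normalised remainder. The Schur complement `σ̃0`
is the largest matrix supported on `π` below `σ0` (a unipotent congruence block-diagonalises
`σ0`), and `σ̃0 = γ π`, so `σ0 - a π ≥ 0` iff `a ≤ γ`. Finally Hölder's inequality gives
`Σ p0^s p1^(1-s) ≤ a^s`, while the left side tends to `a` as `s → 1`; hence the inequalities for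
`s ∈ (s0, 1)` are all equivalent to `a ≤ γ`.
-/

open scoped MatrixOrder

section PseudoInverse

variable {n : ℕ} {A M : Matrix (Fin n) (Fin n) ℂ}

lemma hermCFC_eq_cfc (f : ℝ → ℝ) (hA : A.IsHermitian) : hermCFC f A = cfc f A := by
  rw [hermCFC, dif_pos hA, hA.cfc_eq]
  rfl

lemma cfc_mul_cfc_mul_cfc (f g h : ℝ → ℝ) (A : Matrix (Fin n) (Fin n) ℂ) :
    cfc f A * cfc g A * cfc h A = cfc (fun x => f x * g x * h x) A := by
  have hc (k : ℝ → ℝ) : ContinuousOn k (spectrum ℝ A) := A.finite_real_spectrum.continuousOn k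
  rw [cfc_mul _ _ A (hc _) (hc _), cfc_mul _ _ A (hc _) (hc _)]

lemma pinvMat_eq_cfc (hA : A.IsHermitian) :
    pinvMat A = cfc (fun x : ℝ => if x = 0 then 0 else x⁻¹) A :=
  hermCFC_eq_cfc _ hA

lemma pinvMat_isHermitian (hA : A.IsHermitian) : (pinvMat A).IsHermitian := by
  rw [pinvMat_eq_cfc hA]
  exact cfc_predicate _ A

lemma commute_pinvMat (hA : A.IsHermitian) : Commute A (pinvMat A) := by
  have h := cfc_commute_cfc (fun x : ℝ => x) (fun x : ℝ => if x = 0 then 0 else x⁻¹) A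
  rwa [cfc_id' ℝ A (ha := hA.isSelfAdjoint), ← pinvMat_eq_cfc hA] at h

lemma mul_pinvMat_mul_self (hA : A.IsHermitian) : A * pinvMat A * A = A := by
  have h := cfc_mul_cfc_mul_cfc (fun x => x) (fun x => if x = 0 then 0 else x⁻¹) (fun x => x) A
  rw [cfc_id' ℝ A (ha := hA.isSelfAdjoint), ← pinvMat_eq_cfc hA] at h
  rw [h]
  conv_rhs => rw [← cfc_id' ℝ A (ha := hA.isSelfAdjoint)]
  congr 1
  funext x
  by_cases hx : x = 0 <;> simp [hx]

lemma pinvMat_mul_self_mul_pinvMat (hA : A.IsHermitian) :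
    pinvMat A * A * pinvMat A = pinvMat A := by
  have h := cfc_mul_cfc_mul_cfc (fun x => if x = 0 then 0 else x⁻¹) (fun x => x)
    (fun x => if x = 0 then 0 else x⁻¹) A
  rw [cfc_id' ℝ A (ha := hA.isSelfAdjoint), ← pinvMat_eq_cfc hA] at h
  rw [h, pinvMat_eq_cfc hA]
  congr 1
  funext x
  by_cases hx : x = 0 <;> simp [hx]

lemma mul_pinvMat_eq_zero (hA : A.IsHermitian) (h : M * A = 0) : M * pinvMat A = 0 := by
  rw [← pinvMat_mul_self_mul_pinvMat hA, ← (commute_pinvMat hA).eq, ← mul_assoc, ← mul_assoc, h,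
    zero_mul, zero_mul]

lemma pinvMat_mul_eq_zero (hA : A.IsHermitian) (h : A * M = 0) : pinvMat A * M = 0 := by
  rw [← pinvMat_mul_self_mul_pinvMat hA, mul_assoc (pinvMat A), (commute_pinvMat hA).eq,
    mul_assoc, mul_assoc, h, mul_zero, mul_zero]

end PseudoInverse

section Compression

variable {n : ℕ} {σ J : Matrix (Fin n) (Fin n) ℂ}

lemma Matrix.PosSemidef.mul_eq_zero_of_mul_mul_conjTranspose_eq_zero (hσ : σ.PosSemidef)
    (h : J * σ * Jᴴ = 0) : J * σ = 0 := by
  obtain ⟨C, rfl⟩ := CStarAlgebra.nonneg_iff_eq_star_mul_self.mp hσ.nonneg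
  rw [star_eq_conjTranspose] at h ⊢
  have hCJ : C * Jᴴ = 0 := by
    rw [← conjTranspose_mul_self_eq_zero, conjTranspose_mul, conjTranspose_conjTranspose, ← h]
    simp only [mul_assoc]
  have hJC : J * Cᴴ = 0 := by
    simpa using congrArg (fun M => Mᴴ) hCJ
  rw [← mul_assoc, hJC, zero_mul]

/-- The range of `J σ` lies in the range of the compression `J σ J`. -/
lemma compression_mul_pinvMat_mul (hσ : σ.PosSemidef) (hJ : Jᴴ = J) :
    J * σ * J * pinvMat (J * σ * J) * (J * σ) = J * σ := by
  set B := J * σ * J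
  have hB : B.IsHermitian := by
    simpa [B, hJ, mul_assoc] using hσ.conjTranspose_mul_mul_same J |>.isHermitian
  set P := 1 - B * pinvMat B
  have hPB : P * B = 0 := by rw [sub_mul, one_mul, mul_pinvMat_mul_self hB, sub_self]
  have hP : Pᴴ = P := by
    rw [conjTranspose_sub, conjTranspose_one, conjTranspose_mul, pinvMat_isHermitian hB, hB.eq,
      ← (commute_pinvMat hB).eq]
  have hPJσ : P * J * σ = 0 := by
    refine hσ.mul_eq_zero_of_mul_mul_conjTranspose_eq_zero ?_
    rw [conjTranspose_mul, hP, hJ]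
    calc P * J * σ * (J * P) = P * B * P := by simp only [B, mul_assoc]
      _ = 0 := by rw [hPB, zero_mul]
  calc B * pinvMat B * (J * σ) = J * σ - P * J * σ := by
        simp only [P, sub_mul, one_mul, mul_assoc]
        abel
    _ = J * σ := by rw [hPJσ, sub_zero]

end Compression

section SchurComplement

variable {n : ℕ} {σ π T : Matrix (Fin n) (Fin n) ℂ}

lemma IsStarProjection.conjTranspose_eq (hπ : IsStarProjection π) : πᴴ = π :=
  hπ.isSelfAdjoint.star_eq

lemma compression_isHermitian (hσ : σ.IsHermitian) (hπ : IsStarProjection π) :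
    ((1 - π) * σ * (1 - π)).IsHermitian := by
  rw [IsHermitian, conjTranspose_mul, conjTranspose_mul, hπ.one_sub.conjTranspose_eq, hσ.eq,
    mul_assoc]

lemma proj_mul_pinvMat_compression (hσ : σ.IsHermitian) (hπ : IsStarProjection π) :
    π * pinvMat ((1 - π) * σ * (1 - π)) = 0 :=
  mul_pinvMat_eq_zero (compression_isHermitian hσ hπ) <| by
    rw [← mul_assoc, ← mul_assoc, hπ.mul_one_sub_self, zero_mul, zero_mul]

lemma pinvMat_compression_mul_proj (hσ : σ.IsHermitian) (hπ : IsStarProjection π) :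
    pinvMat ((1 - π) * σ * (1 - π)) * π = 0 :=
  pinvMat_mul_eq_zero (compression_isHermitian hσ hπ) <| by
    rw [mul_assoc, hπ.one_sub_mul_self, mul_zero]

lemma proj_mul_schurCompl_mul_proj (hπ : IsStarProjection π) :
    π * schurCompl σ π * π = schurCompl σ π := by
  have hππ : π * π = π := hπ.isIdempotentElem.eq
  simp only [schurCompl, mul_sub, sub_mul, ← mul_assoc, hππ]
  simp only [mul_assoc, hππ]

/-- The congruence is `K = 1 + B⁺ (1 - π) σ π` with `B = (1 - π) σ (1 - π)`; it is unipotent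
because `(1 - π) σ π B⁺ = 0`. -/
lemma exists_isUnit_sub_eq_star_mul_schurCompl_mul (hσ : σ.PosSemidef)
    (hπ : IsStarProjection π) (hT : π * T * π = T) :
    ∃ K : Matrix (Fin n) (Fin n) ℂ, IsUnit K ∧
      σ - T = star K * (schurCompl σ π - T + (1 - π) * σ * (1 - π)) * K := by
  set J := 1 - π
  set B := J * σ * J
  set X := π * σ * J
  set Y := J * σ * π
  set N := pinvMat B * Y
  have hB : B.IsHermitian := compression_isHermitian hσ.isHermitian hπ
  have hπB := proj_mul_pinvMat_compression hσ.isHermitian hπ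
  have hBπ := pinvMat_compression_mul_proj hσ.isHermitian hπ
  have hYB : Y * pinvMat B = 0 := by rw [mul_assoc, hπB, mul_zero]
  have hYX : star Y = X := by
    simp only [Y, X, J, star_mul, hπ.isSelfAdjoint.star_eq, hπ.one_sub.isSelfAdjoint.star_eq,
      hσ.isHermitian.isSelfAdjoint.star_eq, mul_assoc]
  have hNH : star N = X * pinvMat B := by
    rw [star_mul, hYX, (pinvMat_isHermitian hB).isSelfAdjoint.star_eq]
  have hBBY : B * pinvMat B * Y = Y := by
    simp only [Y, ← mul_assoc]
    rw [mul_assoc _ J σ, compression_mul_pinvMat_mul hσ hπ.one_sub.conjTranspose_eq]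
  have hXBB : X * pinvMat B * B = X := by
    have h := congrArg star hBBY
    rwa [star_mul (B * pinvMat B) Y, star_mul B, hYX,
      (pinvMat_isHermitian hB).isSelfAdjoint.star_eq, hB.isSelfAdjoint.star_eq, ← mul_assoc] at h
  set M := schurCompl σ π - T + B
  have hSB : schurCompl σ π * pinvMat B = 0 := by
    rw [← proj_mul_schurCompl_mul_proj hπ, mul_assoc, hπB, mul_zero]
  have hBS : pinvMat B * schurCompl σ π = 0 := by
    rw [← proj_mul_schurCompl_mul_proj hπ, ← mul_assoc, ← mul_assoc, hBπ, zero_mul, zero_mul]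
  have hTB : T * pinvMat B = 0 := by rw [← hT, mul_assoc, hπB, mul_zero]
  have hBT : pinvMat B * T = 0 := by rw [← hT, ← mul_assoc, ← mul_assoc, hBπ, zero_mul, zero_mul]
  have hMN : M * N = Y := by
    rw [← mul_assoc, add_mul, sub_mul, hSB, hTB, sub_zero, zero_add, hBBY]
  have hNM : star N * M = X := by
    rw [hNH, mul_add, mul_sub, mul_assoc X, mul_assoc X, hBS, hBT, mul_zero, sub_zero, zero_add,
      hXBB]
  refine ⟨1 + N, IsNilpotent.isUnit_one_add ⟨2, by rw [sq, mul_assoc, ← mul_assoc Y, hYB,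
    zero_mul, mul_zero]⟩, ?_⟩
  calc σ - T = M + Y + X + X * pinvMat B * Y := by
        simp only [M, schurCompl, B, X, Y, J]
        noncomm_ring
    _ = star (1 + N) * M * (1 + N) := by
        rw [star_add, star_one, add_mul 1 (star N) M, one_mul, hNM, mul_add, mul_one,
          add_mul M X N, hMN, mul_assoc X]
        abel

/-- Among matrices supported on the range of `π`, the Schur complement is the largest one
below `σ`. -/
theorem posSemidef_sub_iff_schurCompl (hσ : σ.PosSemidef) (hπ : IsStarProjection π)
    (hT : π * T * π = T) : (σ - T).PosSemidef ↔ (schurCompl σ π - T).PosSemidef := by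
  obtain ⟨K, hK, hσT⟩ := exists_isUnit_sub_eq_star_mul_schurCompl_mul hσ hπ hT
  rw [hσT, hK.posSemidef_star_left_conjugate_iff]
  have hB := hσ.conjTranspose_mul_mul_same (1 - π)
  rw [hπ.one_sub.conjTranspose_eq] at hB
  refine ⟨fun h => ?_, fun h => h.add hB⟩
  have hπB : π * ((1 - π) * σ * (1 - π)) * π = 0 := by
    rw [← mul_assoc, ← mul_assoc, hπ.mul_one_sub_self, zero_mul, zero_mul, zero_mul]
  have hc : π * (schurCompl σ π - T + (1 - π) * σ * (1 - π)) * π = schurCompl σ π - T := by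
    rw [mul_add, add_mul, mul_sub, sub_mul, proj_mul_schurCompl_mul_proj hπ, hT, hπB, add_zero]
  have h' := h.conjTranspose_mul_mul_same π
  rwa [hπ.conjTranspose_eq, hc] at h'

end SchurComplement

section PureState

variable {n : ℕ} {ψ : Fin n → ℂ}

lemma trace_vecMulVec_self_star (hψ : star ψ ⬝ᵥ ψ = 1) : (vecMulVec ψ (star ψ)).trace = 1 := by
  rw [trace_vecMulVec, dotProduct_comm, hψ]

lemma isStarProjection_vecMulVec_self_star (hψ : star ψ ⬝ᵥ ψ = 1) :
    IsStarProjection (vecMulVec ψ (star ψ)) where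
  isIdempotentElem := by rw [IsIdempotentElem, vecMulVec_mul_vecMulVec, hψ, one_smul]
  isSelfAdjoint := by
    rw [IsSelfAdjoint, star_eq_conjTranspose, conjTranspose_vecMulVec, star_star]

lemma isDensityMatrix_vecMulVec_self_star (hψ : star ψ ⬝ᵥ ψ = 1) :
    IsDensityMatrix (vecMulVec ψ (star ψ)) :=
  ⟨posSemidef_vecMulVec_self_star ψ, trace_vecMulVec_self_star hψ⟩

lemma vecMulVec_mul_mul_vecMulVec (ψ : Fin n → ℂ) (M : Matrix (Fin n) (Fin n) ℂ) :
    vecMulVec ψ (star ψ) * M * vecMulVec ψ (star ψ)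
      = (star ψ ⬝ᵥ (M *ᵥ ψ)) • vecMulVec ψ (star ψ) := by
  rw [mul_vecMulVec, ← mulVec_mulVec, vecMulVec_mulVec, op_smul_eq_smul, smul_vecMulVec]

lemma eq_trace_smul_of_vecMulVec_mul_mul_vecMulVec (hψ : star ψ ⬝ᵥ ψ = 1)
    {M : Matrix (Fin n) (Fin n) ℂ} (hM : vecMulVec ψ (star ψ) * M * vecMulVec ψ (star ψ) = M) :
    M = M.trace • vecMulVec ψ (star ψ) := by
  have h := vecMulVec_mul_mul_vecMulVec ψ M
  rw [hM] at h
  rw [h, trace_smul, trace_vecMulVec_self_star hψ, smul_eq_mul, mul_one]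

theorem posSemidef_sub_smul_iff_le_re_trace_schurCompl (hψ : star ψ ⬝ᵥ ψ = 1)
    {σ : Matrix (Fin n) (Fin n) ℂ} (hσ : σ.PosSemidef) (a : ℝ) :
    (σ - (a : ℂ) • vecMulVec ψ (star ψ)).PosSemidef ↔
      a ≤ (schurCompl σ (vecMulVec ψ (star ψ))).trace.re := by
  set π := vecMulVec ψ (star ψ)
  have hπ := isStarProjection_vecMulVec_self_star hψ
  have hππ : π * π = π := hπ.isIdempotentElem.eq
  have hT : π * ((a : ℂ) • π) * π = (a : ℂ) • π := by
    rw [mul_smul_comm, smul_mul_assoc, hππ, hππ]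
  rw [posSemidef_sub_iff_schurCompl hσ hπ hT]
  set S := schurCompl σ π
  have hS : S.PosSemidef := by
    have h := (posSemidef_sub_iff_schurCompl hσ hπ (T := 0) (by simp)).mp (by rwa [sub_zero])
    rwa [sub_zero] at h
  have hSre : ((S.trace.re : ℝ) : ℂ) = S.trace :=
    Complex.ext rfl (by simp [(Complex.nonneg_iff.mp hS.trace_nonneg).2])
  have hSc : S = ((S.trace.re : ℝ) : ℂ) • π := by
    rw [hSre]
    exact eq_trace_smul_of_vecMulVec_mul_mul_vecMulVec hψ (proj_mul_schurCompl_mul_proj hπ)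
  rw [show S - (a : ℂ) • π = ((S.trace.re - a : ℝ) : ℂ) • π by
    rw [Complex.ofReal_sub, sub_smul, ← hSc]]
  constructor
  · intro h
    have htr := h.trace_nonneg
    rw [trace_smul, trace_vecMulVec_self_star hψ, smul_eq_mul, mul_one, Complex.zero_le_real] at htr
    linarith
  · intro h
    exact (posSemidef_vecMulVec_self_star ψ).smul (Complex.zero_le_real.mpr (sub_nonneg.mpr h))

end PureState

section Channel

variable {n : ℕ} {X : Type*} [Fintype X]

lemma posSemidef_cqApply {ρ : X → Matrix (Fin n) (Fin n) ℂ} {q : X → ℝ}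
    (hρ : ∀ x, (ρ x).PosSemidef) (hq : ∀ x, 0 ≤ q x) : (cqApply ρ q).PosSemidef :=
  posSemidef_sum _ fun x _ => (hρ x).smul (Complex.zero_le_real.mpr (hq x))

lemma cqApply_ite (P : X → Prop) [DecidablePred P] (q : X → ℝ)
    (M N : Matrix (Fin n) (Fin n) ℂ) :
    cqApply (fun x => if P x then M else N) q
      = ((∑ x, if P x then q x else 0 : ℝ) : ℂ) • M
        + ((∑ x, if P x then 0 else q x : ℝ) : ℂ) • N := by
  simp only [cqApply, Complex.ofReal_sum, Finset.sum_smul, ← Finset.sum_add_distrib]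
  refine Finset.sum_congr rfl fun x _ => ?_
  split_ifs <;> simp

lemma sum_ite_add_sum_ite_not (P : X → Prop) [DecidablePred P] (f : X → ℝ) :
    (∑ x, if P x then f x else 0) + (∑ x, if P x then 0 else f x) = ∑ x, f x := by
  rw [← Finset.sum_add_distrib]
  exact Finset.sum_congr rfl fun x _ => by split_ifs <;> simp

lemma eq_vecMulVec_of_cqApply_eq {ψ : Fin n → ℂ} (hψ : star ψ ⬝ᵥ ψ = 1)
    {ρ : X → Matrix (Fin n) (Fin n) ℂ} {p : X → ℝ} (hρ : ∀ x, IsDensityMatrix (ρ x))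
    (hp : ∀ x, 0 ≤ p x) (h : cqApply ρ p = vecMulVec ψ (star ψ)) {x : X} (hx : 0 < p x) :
    ρ x = vecMulVec ψ (star ψ) := by
  set π := vecMulVec ψ (star ψ)
  have hπ := isStarProjection_vecMulVec_self_star hψ
  have hJ : (1 - π)ᴴ = 1 - π := hπ.one_sub.conjTranspose_eq
  have hterm (y : X) : 0 ≤ (p y : ℂ) • ((1 - π) * ρ y * (1 - π)) := by
    have hy := (hρ y).1.conjTranspose_mul_mul_same (1 - π)
    rw [hJ] at hy
    exact (hy.smul (Complex.zero_le_real.mpr (hp y))).nonneg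
  have hsum : ∑ y, (p y : ℂ) • ((1 - π) * ρ y * (1 - π)) = 0 := by
    calc ∑ y, (p y : ℂ) • ((1 - π) * ρ y * (1 - π)) = (1 - π) * cqApply ρ p * (1 - π) := by
          simp only [cqApply, Finset.mul_sum, Finset.sum_mul, mul_smul_comm, smul_mul_assoc]
      _ = 0 := by rw [h, hπ.one_sub_mul_self, zero_mul]
  have hJρJ : (1 - π) * ρ x * (1 - π) = 0 :=
    (smul_eq_zero.mp ((Finset.sum_eq_zero_iff_of_nonneg fun y _ => hterm y).mp hsum x
      (Finset.mem_univ x))).resolve_left (Complex.ofReal_ne_zero.mpr hx.ne')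
  have hJρ : (1 - π) * ρ x = 0 :=
    (hρ x).1.mul_eq_zero_of_mul_mul_conjTranspose_eq_zero (by rwa [hJ])
  have hρJ : ρ x * (1 - π) = 0 := by
    simpa [hJ, (hρ x).1.isHermitian.eq] using congrArg (fun M => Mᴴ) hJρ
  have hπρπ : π * ρ x * π = ρ x := by
    rw [sub_mul, one_mul, sub_eq_zero] at hJρ
    rw [mul_sub, mul_one, sub_eq_zero] at hρJ
    rw [← hJρ, ← hρJ]
  rw [eq_trace_smul_of_vecMulVec_mul_mul_vecMulVec hψ hπρπ, (hρ x).2, one_smul]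

lemma IsDensityMatrix.exists_eq_smul_add_smul {σ π : Matrix (Fin n) (Fin n) ℂ}
    (hσ : IsDensityMatrix σ) (hπ : IsDensityMatrix π) {a : ℝ}
    (h : (σ - (a : ℂ) • π).PosSemidef) :
    ∃ τ, IsDensityMatrix τ ∧ σ = (a : ℂ) • π + ((1 - a : ℝ) : ℂ) • τ := by
  have htr : (σ - (a : ℂ) • π).trace = ((1 - a : ℝ) : ℂ) := by
    rw [trace_sub, trace_smul, hσ.2, hπ.2, smul_eq_mul, mul_one, Complex.ofReal_sub,
      Complex.ofReal_one]
  rcases eq_or_ne a 1 with rfl | ha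
  · refine ⟨π, hπ, ?_⟩
    rw [sub_self, Complex.ofReal_zero, h.trace_eq_zero_iff] at htr
    rw [sub_self, Complex.ofReal_zero, zero_smul, add_zero, ← sub_eq_zero, htr]
  · have ha' : ((1 - a : ℝ) : ℂ) ≠ 0 := Complex.ofReal_ne_zero.mpr (sub_ne_zero.mpr ha.symm)
    refine ⟨((1 - a : ℝ) : ℂ)⁻¹ • (σ - (a : ℂ) • π), ⟨?_, ?_⟩, ?_⟩
    · have h1a := h.trace_nonneg
      rw [htr, Complex.zero_le_real] at h1a
      rw [← Complex.ofReal_inv]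
      exact h.smul (Complex.zero_le_real.mpr (inv_nonneg.mpr h1a))
    · rw [trace_smul, htr, smul_eq_mul, inv_mul_cancel₀ ha']
    · rw [smul_smul, mul_inv_cancel₀ ha', one_smul, add_sub_cancel]

theorem exists_cq_channel_iff_posSemidef {ψ : Fin n → ℂ} (hψ : star ψ ⬝ᵥ ψ = 1)
    {σ0 : Matrix (Fin n) (Fin n) ℂ} (hσ0 : IsDensityMatrix σ0) {p0 p1 : X → ℝ}
    (hp0 : ProbVec p0) (hp1 : ProbVec p1) :
    (∃ ρ : X → Matrix (Fin n) (Fin n) ℂ, (∀ x, IsDensityMatrix (ρ x)) ∧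
        cqApply ρ p0 = σ0 ∧ cqApply ρ p1 = vecMulVec ψ (star ψ)) ↔
      (σ0 - ((∑ x, if 0 < p1 x then p0 x else 0 : ℝ) : ℂ) • vecMulVec ψ (star ψ)).PosSemidef := by
  set a := ∑ x, if 0 < p1 x then p0 x else 0
  constructor
  · rintro ⟨ρ, hρ, rfl, hρ1⟩
    have hsplit : cqApply ρ p0 - (a : ℂ) • vecMulVec ψ (star ψ)
        = cqApply ρ (fun x => if 0 < p1 x then 0 else p0 x) := by
      rw [sub_eq_iff_eq_add', Complex.ofReal_sum, Finset.sum_smul]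
      simp only [cqApply, ← Finset.sum_add_distrib]
      refine Finset.sum_congr rfl fun x _ => ?_
      split_ifs with hx
      · rw [eq_vecMulVec_of_cqApply_eq hψ hρ hp1.1 hρ1 hx]
        simp
      · simp
    rw [hsplit]
    exact posSemidef_cqApply (fun x => (hρ x).1) fun x => by split_ifs <;> simp [hp0.1 x]
  · intro h
    obtain ⟨τ, hτ, hσ0τ⟩ :=
      hσ0.exists_eq_smul_add_smul (isDensityMatrix_vecMulVec_self_star hψ) h
    have hp1_off : ∀ x, (if 0 < p1 x then 0 else p1 x) = 0 := fun x => by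
      split_ifs with hx
      · rfl
      · exact le_antisymm (not_lt.mp hx) (hp1.1 x)
    have hsupp : (∑ x, if 0 < p1 x then p1 x else 0) = 1 := by
      rw [← hp1.2, ← sum_ite_add_sum_ite_not (fun x => 0 < p1 x) p1,
        Finset.sum_congr rfl fun x _ => hp1_off x, Finset.sum_const_zero, add_zero]
    refine ⟨fun x => if 0 < p1 x then vecMulVec ψ (star ψ) else τ, fun x => ?_, ?_, ?_⟩
    · dsimp only
      split_ifs
      · exact isDensityMatrix_vecMulVec_self_star hψ
      · exact hτ
    · rw [cqApply_ite, hσ0τ, ← hp0.2, ← sum_ite_add_sum_ite_not (fun x => 0 < p1 x) p0,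
        add_sub_cancel_left]
    · rw [cqApply_ite, Finset.sum_congr rfl fun x _ => hp1_off x, hsupp]
      simp

end Channel

section Renyi

open Filter Topology

variable {X : Type*} [Fintype X] {p0 p1 : X → ℝ}

lemma sum_rpow_mul_rpow_le (hp0 : ∀ x, 0 ≤ p0 x) (hp1 : ProbVec p1) {s : ℝ} (hs0 : 0 < s)
    (hs1 : s < 1) :
    (∑ x, if 0 < p1 x then p0 x ^ s * p1 x ^ (1 - s) else 0) ≤
      (∑ x, if 0 < p1 x then p0 x else 0) ^ s := by
  rw [← Finset.sum_filter, ← Finset.sum_filter]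
  set F := Finset.univ.filter fun x => 0 < p1 x
  have hF : (∑ x ∈ F, p1 x) ^ (1 - s) ≤ 1 := by
    refine Real.rpow_le_one (Finset.sum_nonneg fun x _ => hp1.1 x) ?_ (by linarith)
    calc ∑ x ∈ F, p1 x ≤ ∑ x, p1 x :=
          Finset.sum_le_sum_of_subset_of_nonneg (Finset.subset_univ F) fun x _ _ => hp1.1 x
      _ = 1 := hp1.2
  have holder := Real.inner_le_Lp_mul_Lq_of_nonneg F (Real.HolderConjugate.inv_one_sub_inv hs0 hs1)
    (f := fun x => p0 x ^ s) (g := fun x => p1 x ^ (1 - s))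
    (fun x _ => Real.rpow_nonneg (hp0 x) s) (fun x _ => Real.rpow_nonneg (hp1.1 x) _)
  simp only [one_div, inv_inv] at holder
  rw [Finset.sum_congr rfl fun x _ => Real.rpow_rpow_inv (hp0 x) hs0.ne',
    Finset.sum_congr rfl fun x _ => Real.rpow_rpow_inv (hp1.1 x) (by linarith : 1 - s ≠ 0)]
    at holder
  calc _ ≤ _ := holder
    _ ≤ (∑ x ∈ F, p0 x) ^ s * 1 :=
        mul_le_mul_of_nonneg_left hF (Real.rpow_nonneg (Finset.sum_nonneg fun x _ => hp0 x) s)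
    _ = (∑ x ∈ F, p0 x) ^ s := mul_one _

lemma tendsto_sum_rpow_mul_rpow (p0 p1 : X → ℝ) :
    Tendsto (fun s : ℝ => ∑ x, if 0 < p1 x then p0 x ^ s * p1 x ^ (1 - s) else 0) (𝓝 1)
      (𝓝 (∑ x, if 0 < p1 x then p0 x else 0)) := by
  refine tendsto_finsetSum _ fun x _ => ?_
  split_ifs with hx
  · have hcont : ContinuousAt (fun s : ℝ => p0 x ^ s * p1 x ^ (1 - s)) 1 :=
      (Real.continuousAt_const_rpow' one_ne_zero).mul
        ((Real.continuousAt_const_rpow hx.ne').comp (continuousAt_const.sub continuousAt_id))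
    simpa using hcont.tendsto
  · exact tendsto_const_nhds

theorem forall_sum_rpow_mul_rpow_le_iff (hp0 : ∀ x, 0 ≤ p0 x) (hp1 : ProbVec p1) {s0 c : ℝ}
    (hs0 : 0 ≤ s0) (hs01 : s0 < 1) :
    (∀ s : ℝ, s0 < s → s < 1 →
        (∑ x, if 0 < p1 x then p0 x ^ s * p1 x ^ (1 - s) else 0) ≤ c ^ s) ↔
      (∑ x, if 0 < p1 x then p0 x else 0) ≤ c := by
  constructor
  · intro h
    have : (𝓝[Set.Ioo s0 1] (1 : ℝ)).NeBot := right_nhdsWithin_Ioo_neBot hs01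
    have hc : Tendsto (fun s : ℝ => c ^ s) (𝓝[Set.Ioo s0 1] 1) (𝓝 c) := by
      simpa using (Real.continuousAt_const_rpow' one_ne_zero).tendsto.mono_left
        nhdsWithin_le_nhds
    refine le_of_tendsto_of_tendsto ((tendsto_sum_rpow_mul_rpow p0 p1).mono_left
      nhdsWithin_le_nhds) hc ?_
    filter_upwards [self_mem_nhdsWithin] with s hs using h s hs.1 hs.2
  · intro h s hs0s hs1
    have ha : 0 ≤ ∑ x, if 0 < p1 x then p0 x else 0 :=
      Finset.sum_nonneg fun x _ => by split_ifs <;> simp [hp0 x]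
    exact (sum_rpow_mul_rpow_le hp0 hp1 (by linarith) hs1).trans
      (Real.rpow_le_rpow ha h (by linarith))

end Renyi

/-- For a pure target state `σ1 = ψψ*`, a classical-to-quantum
channel `Γ` with `Γ(p0) = σ0`, `Γ(p1) = σ1` exists iff
`Σ_{x : p1(x)>0} p0(x)^s p1(x)^{1-s} ≤ γ^s` for every `s ∈ (s0,1)`,
where `γ = tr σ̃0`. -/
theorem cq_channel_exists_iff_rpow_ineq {n : ℕ} {X : Type*} [Fintype X]
    (ψ : Fin n → ℂ) (hψ : star ψ ⬝ᵥ ψ = 1)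
    (σ0 : Matrix (Fin n) (Fin n) ℂ) (hσ0 : IsDensityMatrix σ0)
    (p0 p1 : X → ℝ) (hp0 : ProbVec p0) (hp1 : ProbVec p1)
    (s0 : ℝ) (hs0 : 0 < s0) (hs01 : s0 < 1) :
    (∃ ρ : X → Matrix (Fin n) (Fin n) ℂ, (∀ x, IsDensityMatrix (ρ x)) ∧
        cqApply ρ p0 = σ0 ∧ cqApply ρ p1 = vecMulVec ψ (star ψ)) ↔
      ∀ s : ℝ, s0 < s → s < 1 →
        (∑ x, if 0 < p1 x then p0 x ^ s * p1 x ^ (1 - s) else 0) ≤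
          ((schurCompl σ0 (vecMulVec ψ (star ψ))).trace.re) ^ s := by
  rw [exists_cq_channel_iff_posSemidef hψ hσ0 hp0 hp1,
    posSemidef_sub_smul_iff_le_re_trace_schurCompl hψ hσ0.1,
    forall_sum_rpow_mul_rpow_le_iff hp0.1 hp1 hs0.le hs01]
end CQToolkit
end

section
/- Let p0, p1 be probability vectors on a finite set X and σ0, σ1 be n×n density matrices. A classical-to-quantum channel Γ with Γ(p0) = σ0 and Γ(p1) = σ1 exists if and only if for every k and every pair of Hermitian k×k matrices W0, W1, sup over all families (ρ_x)_{x∈X} of k×k density matrices of Σ_{θ∈{0,1}} Σ_{x∈X} p_θ(x)·tr(W_θ ρ_x) is at least sup over all CPTP maps Λ from n×n to k×k complex matrices of Σ_{θ∈{0,1}} tr(W_θ·Λ(σ_θ)). -/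
open Matrix
open scoped Kronecker ComplexOrder

/-! The set of pairs `(Γ(p0), Γ(p1))` realised by classical-to-quantum channels is the image of the
compact convex set of families of density matrices under a linear map. If `(σ0, σ1)` lies in it,
every CPTP post-processing of `(σ0, σ1)` is again realised by a channel, namely `Λ ∘ Γ`, so the
quantum gain never beats the classical one. If it does not, a Hahn–Banach hyperplane separates it;
the separating functional is `(A, B) ↦ re tr (W0 A) + re tr (W1 B)` on Hermitian matrices, and the
identity channel then makes the quantum gain exceed the classical one. -/

lemma csSup_le_csSup_of_nonempty_imp {α : Type*} [ConditionallyCompleteLattice α]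
    {s t : Set α} (ht : BddAbove t) (hst : s ⊆ t) (hne : t.Nonempty → s.Nonempty) :
    sSup s ≤ sSup t := by
  rcases s.eq_empty_or_nonempty with rfl | hs
  · rw [Set.not_nonempty_iff_eq_empty.mp fun h => (hne h).ne_empty rfl]
  · exact csSup_le_csSup ht hs hst

instance {m l : Type*} : LocallyConvexSpace ℝ (Matrix m l ℂ) :=
  inferInstanceAs (LocallyConvexSpace ℝ (m → l → ℂ))

namespace Matrix

variable {ι 𝕜 : Type*} [RCLike 𝕜]

lemma PosSemidef.norm_apply_sq_le {A : Matrix ι ι 𝕜} (hA : A.PosSemidef) (i j : ι) :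
    ‖A i j‖ ^ 2 ≤ RCLike.re (A i i) * RCLike.re (A j j) := by
  have hdet := (hA.submatrix ![i, j]).det_nonneg
  rw [det_fin_two] at hdet
  simp only [submatrix_apply, Matrix.cons_val_zero, Matrix.cons_val_one] at hdet
  rw [← hA.1.apply j i, ← hA.1.coe_re_apply_self i, ← hA.1.coe_re_apply_self j, RCLike.star_def,
    RCLike.mul_conj] at hdet
  exact_mod_cast sub_nonneg.mp hdet

variable [Fintype ι]

lemma PosSemidef.re_apply_self_le_re_trace {A : Matrix ι ι 𝕜} (hA : A.PosSemidef) (i : ι) :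
    RCLike.re (A i i) ≤ RCLike.re A.trace := by
  rw [trace, map_sum]
  exact Finset.single_le_sum (f := fun j => RCLike.re (A j j))
    (fun j _ => (RCLike.nonneg_iff.mp hA.diag_nonneg).1) (Finset.mem_univ i)

lemma isClosed_setOf_posSemidef : IsClosed {A : Matrix ι ι 𝕜 | A.PosSemidef} := by
  simp only [posSemidef_iff_dotProduct_mulVec, Set.ofPred_and, Set.ofPred_forall]
  exact (isClosed_eq continuous_id.matrix_conjTranspose continuous_id).inter <|
    isClosed_iInter fun x => isClosed_le continuous_const <|
      continuous_const.dotProduct (continuous_id.matrix_mulVec continuous_const)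

variable {m l : Type*} [Fintype m] [DecidableEq m]

def choiMatrix (Λ : Matrix m m ℂ →ₗ[ℂ] Matrix l l ℂ) : Matrix (l × m) (l × m) ℂ :=
  ∑ i, ∑ j, Λ (single i j 1) ⊗ₖ single i j 1

lemma choiMatrix_apply (Λ : Matrix m m ℂ →ₗ[ℂ] Matrix l l ℂ) (a b : l) (i j : m) :
    choiMatrix Λ (a, i) (b, j) = Λ (single i j 1) a b := by
  simp [choiMatrix, sum_apply, kroneckerMap_apply, single_apply, ite_and]

lemma linearMap_apply_eq_sum_single (Λ : Matrix m m ℂ →ₗ[ℂ] Matrix l l ℂ) (A : Matrix m m ℂ) :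
    Λ A = ∑ i, ∑ j, A i j • Λ (single i j 1) := by
  conv_lhs => rw [matrix_eq_sum_single A]
  simp only [map_sum]
  refine Finset.sum_congr rfl fun i _ => Finset.sum_congr rfl fun j _ => ?_
  rw [← map_smul, smul_single, smul_eq_mul, mul_one]

/-- By the Schur product theorem the right-hand side is positive semidefinite as soon as the Choi
matrix and `A` are. -/
lemma apply_eq_compression_choiMatrix [Fintype l] [DecidableEq l]
    (Λ : Matrix m m ℂ →ₗ[ℂ] Matrix l l ℂ) (A : Matrix m m ℂ) :
    Λ A = (of fun (p : l × m) a => if p.1 = a then (1 : ℂ) else 0)ᴴ *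
      (choiMatrix Λ ⊙ (of (fun _ _ => 1 : l → l → ℂ) ⊗ₖ A)) *
      (of fun (p : l × m) a => if p.1 = a then (1 : ℂ) else 0) := by
  ext a b
  simp [linearMap_apply_eq_sum_single Λ A, mul_apply, sum_apply, Fintype.sum_prod_type,
    choiMatrix_apply]
  rw [Finset.sum_comm]
  exact Finset.sum_congr rfl fun _ _ => Finset.sum_congr rfl fun _ _ => mul_comm _ _

lemma PosSemidef.of_posSemidef_choiMatrix [Fintype l] {Λ : Matrix m m ℂ →ₗ[ℂ] Matrix l l ℂ}
    (hΛ : (choiMatrix Λ).PosSemidef) {A : Matrix m m ℂ} (hA : A.PosSemidef) :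
    (Λ A).PosSemidef := by
  classical
  have hJ : (of (fun _ _ => 1 : l → l → ℂ)).PosSemidef := by
    simpa [vecMulVec] using posSemidef_vecMulVec_self_star (fun _ : l => (1 : ℂ))
  rw [apply_eq_compression_choiMatrix]
  exact (hΛ.hadamard (hJ.kronecker hA)).conjTranspose_mul_mul_same _

lemma choiMatrix_id :
    choiMatrix (LinearMap.id : Matrix m m ℂ →ₗ[ℂ] Matrix m m ℂ) =
      vecMulVec (fun p : m × m => if p.1 = p.2 then 1 else 0)
        (star fun p : m × m => if p.1 = p.2 then 1 else 0) := by
  ext ⟨a, i⟩ ⟨b, j⟩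
  simp only [choiMatrix_apply, LinearMap.id_apply, single_apply, vecMulVec_apply, Pi.star_apply]
  split_ifs <;> simp_all

def replacementChannel (τ : Matrix l l ℂ) : Matrix m m ℂ →ₗ[ℂ] Matrix l l ℂ :=
  (traceLinearMap m ℂ ℂ).smulRight τ

lemma choiMatrix_replacementChannel (τ : Matrix l l ℂ) :
    choiMatrix (replacementChannel τ : Matrix m m ℂ →ₗ[ℂ] Matrix l l ℂ) = τ ⊗ₖ 1 := by
  ext ⟨a, i⟩ ⟨b, j⟩
  rcases eq_or_ne i j with rfl | hij
  · simp [choiMatrix_apply, replacementChannel, trace_single_eq_same]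
  · simp [choiMatrix_apply, replacementChannel, trace_single_eq_of_ne, hij]

lemma exists_re_trace_mul_eq (f : Matrix m m ℂ →ₗ[ℝ] ℝ) :
    ∃ V : Matrix m m ℂ, ∀ A, (V * A).trace.re = f A := by
  refine ⟨of fun i j => (f (single j i 1) : ℂ) - f (Complex.I • single j i 1) * Complex.I,
    fun A => ?_⟩
  have hf (i j : m) (z : ℂ) :
      f (single i j z) = z.re * f (single i j 1) + z.im * f (Complex.I • single i j 1) := by
    have hz : single i j z = z.re • single i j (1 : ℂ) + z.im • (Complex.I • single i j 1) := by
      rw [smul_single, smul_single, smul_single, ← single_add]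
      simp
    rw [hz, map_add, map_smul, map_smul, smul_eq_mul, smul_eq_mul]
  conv_rhs => rw [matrix_eq_sum_single A]
  simp only [map_sum, trace, diag_apply, mul_apply, Complex.re_sum]
  rw [Finset.sum_comm]
  refine Finset.sum_congr rfl fun i _ => Finset.sum_congr rfl fun j _ => ?_
  rw [hf]
  simp [Complex.mul_re]
  ring

lemma exists_isHermitian_re_trace_mul_eq (f : Matrix m m ℂ →ₗ[ℝ] ℝ) :
    ∃ W : Matrix m m ℂ, W.IsHermitian ∧ ∀ A, A.IsHermitian → (W * A).trace.re = f A := by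
  obtain ⟨V, hV⟩ := exists_re_trace_mul_eq f
  refine ⟨(2⁻¹ : ℝ) • (V + Vᴴ), (isHermitian_add_transpose_self V).smul (by simp), fun A hA => ?_⟩
  have hadj : (Vᴴ * A).trace.re = (V * A).trace.re := by
    rw [← hA.eq, ← conjTranspose_mul, trace_conjTranspose, trace_mul_comm, hA.eq]
    simp
  simp [add_mul, trace_add, hadj, hV]
  ring

end Matrix

section DensityMatrix

variable {n k : ℕ}

lemma IsDensityMatrix.norm_apply_le_one {ρ : Matrix (Fin n) (Fin n) ℂ} (hρ : IsDensityMatrix ρ)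
    (i j : Fin n) : ‖ρ i j‖ ≤ 1 := by
  have hdiag (i : Fin n) : (ρ i i).re ≤ 1 := by
    simpa [hρ.2] using hρ.1.re_apply_self_le_re_trace i
  have hdiag_nonneg (i : Fin n) : 0 ≤ (ρ i i).re := (Complex.nonneg_iff.mp hρ.1.diag_nonneg).1
  have hsq : ‖ρ i j‖ ^ 2 ≤ (ρ i i).re * (ρ j j).re := hρ.1.norm_apply_sq_le i j
  exact (sq_le_one_iff₀ (norm_nonneg _)).mp <|
    hsq.trans (mul_le_one₀ (hdiag i) (hdiag_nonneg j) (hdiag j))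

lemma isCompact_setOf_isDensityMatrix :
    IsCompact {ρ : Matrix (Fin n) (Fin n) ℂ | IsDensityMatrix ρ} := by
  refine (isCompact_univ_pi fun _ => isCompact_univ_pi fun _ => isCompact_closedBall (0 : ℂ) 1)
    |>.of_isClosed_subset ?_ fun ρ hρ i _ j _ => ?_
  · exact isClosed_setOf_posSemidef.inter (isClosed_eq continuous_id.matrix_trace continuous_const)
  · simpa using hρ.norm_apply_le_one i j

lemma convex_setOf_isDensityMatrix :
    Convex ℝ {ρ : Matrix (Fin n) (Fin n) ℂ | IsDensityMatrix ρ} := by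
  intro ρ hρ τ hτ s t hs ht hst
  refine ⟨(hρ.1.smul hs).add (hτ.1.smul ht), ?_⟩
  rw [trace_add, trace_smul, trace_smul, hρ.2, hτ.2, ← add_smul, hst, one_smul]

lemma IsCPTP.isDensityMatrix_apply {Λ : Matrix (Fin n) (Fin n) ℂ →ₗ[ℂ] Matrix (Fin k) (Fin k) ℂ}
    (hΛ : IsCPTP Λ) {ρ : Matrix (Fin n) (Fin n) ℂ} (hρ : IsDensityMatrix ρ) :
    IsDensityMatrix (Λ ρ) :=
  ⟨PosSemidef.of_posSemidef_choiMatrix hΛ.2 hρ.1, (hΛ.1 ρ).trans hρ.2⟩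

lemma isCPTP_id : IsCPTP (LinearMap.id : Matrix (Fin n) (Fin n) ℂ →ₗ[ℂ] _) := by
  refine ⟨fun _ => rfl, ?_⟩
  change (choiMatrix _).PosSemidef
  rw [choiMatrix_id]
  exact posSemidef_vecMulVec_self_star _

lemma isCPTP_replacementChannel {τ : Matrix (Fin k) (Fin k) ℂ} (hτ : IsDensityMatrix τ) :
    IsCPTP (replacementChannel τ : Matrix (Fin n) (Fin n) ℂ →ₗ[ℂ] _) := by
  refine ⟨fun A => ?_, ?_⟩
  · simp [replacementChannel, hτ.2]
  · change (choiMatrix _).PosSemidef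
    rw [choiMatrix_replacementChannel]
    exact hτ.1.kronecker PosSemidef.one

lemma bddAbove_setOf_isCPTP {σ0 σ1 : Matrix (Fin n) (Fin n) ℂ} (hσ0 : IsDensityMatrix σ0)
    (hσ1 : IsDensityMatrix σ1) (W0 W1 : Matrix (Fin k) (Fin k) ℂ) :
    BddAbove {v : ℝ | ∃ Λ : Matrix (Fin n) (Fin n) ℂ →ₗ[ℂ] Matrix (Fin k) (Fin k) ℂ,
      IsCPTP Λ ∧ v = (W0 * Λ σ0).trace.re + (W1 * Λ σ1).trace.re} := by
  refine ((isCompact_setOf_isDensityMatrix.prod isCompact_setOf_isDensityMatrix).bddAbove_image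
    (f := fun ρ : _ × _ => (W0 * ρ.1).trace.re + (W1 * ρ.2).trace.re)
    (by fun_prop)).mono ?_
  rintro v ⟨Λ, hΛ, rfl⟩
  exact ⟨(Λ σ0, Λ σ1), ⟨hΛ.isDensityMatrix_apply hσ0, hΛ.isDensityMatrix_apply hσ1⟩, rfl⟩

end DensityMatrix

section cqApply

variable {X : Type*} [Fintype X] {n : ℕ}

def cqApplyLinear (p : X → ℝ) :
    (X → Matrix (Fin n) (Fin n) ℂ) →ₗ[ℝ] Matrix (Fin n) (Fin n) ℂ where
  toFun ρ := cqApply ρ p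
  map_add' ρ τ := by simp [cqApply, Finset.sum_add_distrib]
  map_smul' c ρ := by simp [cqApply, Finset.smul_sum, smul_comm (p _ : ℂ)]

lemma map_cqApply {k : ℕ} (Λ : Matrix (Fin n) (Fin n) ℂ →ₗ[ℂ] Matrix (Fin k) (Fin k) ℂ)
    (ρ : X → Matrix (Fin n) (Fin n) ℂ) (p : X → ℝ) :
    Λ (cqApply ρ p) = cqApply (fun x => Λ (ρ x)) p := by
  simp [cqApply, map_sum]

lemma re_trace_mul_cqApply (W : Matrix (Fin n) (Fin n) ℂ) (ρ : X → Matrix (Fin n) (Fin n) ℂ)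
    (p : X → ℝ) : (W * cqApply ρ p).trace.re = ∑ x, p x * (W * ρ x).trace.re := by
  simp [cqApply, Finset.mul_sum, trace_sum]

lemma isHermitian_cqApply {ρ : X → Matrix (Fin n) (Fin n) ℂ} (hρ : ∀ x, (ρ x).IsHermitian)
    (p : X → ℝ) : (cqApply ρ p).IsHermitian :=
  isSelfAdjoint_sum _ fun x _ => (hρ x).smul (Complex.conj_ofReal (p x))

lemma nonempty_of_isDensityMatrix_cqApply {ρ : X → Matrix (Fin n) (Fin n) ℂ} {p : X → ℝ}
    (h : IsDensityMatrix (cqApply ρ p)) : Nonempty X := by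
  by_contra hX
  simpa [not_nonempty_iff.mp hX, cqApply] using h.2

lemma bddAbove_setOf_cqApply (p0 p1 : X → ℝ) (W0 W1 : Matrix (Fin n) (Fin n) ℂ) :
    BddAbove {v : ℝ | ∃ ρ : X → Matrix (Fin n) (Fin n) ℂ, (∀ x, IsDensityMatrix (ρ x)) ∧
      v = (∑ x, p0 x * (W0 * ρ x).trace.re) + (∑ x, p1 x * (W1 * ρ x).trace.re)} := by
  refine ((isCompact_univ_pi fun _ : X => isCompact_setOf_isDensityMatrix).bddAbove_image
    (f := fun ρ => (∑ x, p0 x * (W0 * ρ x).trace.re) + (∑ x, p1 x * (W1 * ρ x).trace.re))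
    (by fun_prop)).mono ?_
  rintro v ⟨ρ, hρ, rfl⟩
  exact ⟨ρ, fun x _ => hρ x, rfl⟩

lemma exists_separating_isHermitian (p0 p1 : X → ℝ) {σ0 σ1 : Matrix (Fin n) (Fin n) ℂ}
    (hσ0 : σ0.IsHermitian) (hσ1 : σ1.IsHermitian)
    (h : ¬ ∃ ρ : X → Matrix (Fin n) (Fin n) ℂ, (∀ x, IsDensityMatrix (ρ x)) ∧
      cqApply ρ p0 = σ0 ∧ cqApply ρ p1 = σ1) :
    ∃ (W0 W1 : Matrix (Fin n) (Fin n) ℂ) (u : ℝ), W0.IsHermitian ∧ W1.IsHermitian ∧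
      (∀ ρ : X → Matrix (Fin n) (Fin n) ℂ, (∀ x, IsDensityMatrix (ρ x)) →
        (W0 * cqApply ρ p0).trace.re + (W1 * cqApply ρ p1).trace.re < u) ∧
      u < (W0 * σ0).trace.re + (W1 * σ1).trace.re := by
  set D := Set.univ.pi fun _ : X => {ρ : Matrix (Fin n) (Fin n) ℂ | IsDensityMatrix ρ}
  set g := (cqApplyLinear (n := n) p0).prod (cqApplyLinear p1)
  have hconvex : Convex ℝ (g '' D) :=
    (convex_pi fun _ _ => convex_setOf_isDensityMatrix).linear_image g
  have hclosed : IsClosed (g '' D) :=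
    ((isCompact_univ_pi fun _ => isCompact_setOf_isDensityMatrix).image
      (LinearMap.continuous_of_finiteDimensional g)).isClosed
  have hnotMem : (σ0, σ1) ∉ g '' D := by
    rintro ⟨ρ, hρ, hg⟩
    exact h ⟨ρ, fun x => hρ x trivial, congrArg Prod.fst hg, congrArg Prod.snd hg⟩
  obtain ⟨f, u, hfD, hfσ⟩ := geometric_hahn_banach_closed_point hconvex hclosed hnotMem
  obtain ⟨W0, hW0, hfW0⟩ :=
    exists_isHermitian_re_trace_mul_eq (f.toLinearMap ∘ₗ LinearMap.inl ℝ _ _)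
  obtain ⟨W1, hW1, hfW1⟩ :=
    exists_isHermitian_re_trace_mul_eq (f.toLinearMap ∘ₗ LinearMap.inr ℝ _ _)
  have hf {A B : Matrix (Fin n) (Fin n) ℂ} (hA : A.IsHermitian) (hB : B.IsHermitian) :
      (W0 * A).trace.re + (W1 * B).trace.re = f (A, B) := by
    simp [hfW0 A hA, hfW1 B hB, ← map_add]
  refine ⟨W0, W1, u, hW0, hW1, fun ρ hρ => ?_, hf hσ0 hσ1 ▸ hfσ⟩
  have hρH (x : X) : (ρ x).IsHermitian := (hρ x).1.1
  rw [hf (isHermitian_cqApply hρH p0) (isHermitian_cqApply hρH p1)]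
  exact hfD _ ⟨ρ, fun x _ => hρ x, rfl⟩

end cqApply

theorem cq_channel_exists_iff_randomization_general {X : Type*} [Fintype X] {n : ℕ}
    (p0 p1 : X → ℝ)
    (σ0 σ1 : Matrix (Fin n) (Fin n) ℂ)
    (hσ0 : IsDensityMatrix σ0) (hσ1 : IsDensityMatrix σ1) :
    (∃ ρ : X → Matrix (Fin n) (Fin n) ℂ, (∀ x, IsDensityMatrix (ρ x)) ∧
        cqApply ρ p0 = σ0 ∧ cqApply ρ p1 = σ1) ↔
      ∀ (k : ℕ) (W0 W1 : Matrix (Fin k) (Fin k) ℂ),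
        W0.IsHermitian → W1.IsHermitian →
        sSup {v : ℝ | ∃ Λ : Matrix (Fin n) (Fin n) ℂ →ₗ[ℂ] Matrix (Fin k) (Fin k) ℂ,
            IsCPTP Λ ∧ v = (W0 * Λ σ0).trace.re + (W1 * Λ σ1).trace.re} ≤
          sSup {v : ℝ | ∃ ρ : X → Matrix (Fin k) (Fin k) ℂ,
            (∀ x, IsDensityMatrix (ρ x)) ∧
            v = (∑ x, p0 x * (W0 * ρ x).trace.re) +
              (∑ x, p1 x * (W1 * ρ x).trace.re)} := by
  constructor
  · rintro ⟨ρ, hρ, rfl, rfl⟩ k W0 W1 - -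
    refine csSup_le_csSup_of_nonempty_imp (bddAbove_setOf_cqApply p0 p1 W0 W1) ?_ ?_
    · rintro v ⟨Λ, hΛ, rfl⟩
      exact ⟨fun x => Λ (ρ x), fun x => hΛ.isDensityMatrix_apply (hρ x), by
        rw [map_cqApply, map_cqApply, re_trace_mul_cqApply, re_trace_mul_cqApply]⟩
    · -- `sSup ∅ = 0`, so the CPTP set must be nonempty whenever the classical one is.
      rintro ⟨-, ρ', hρ', -⟩
      obtain ⟨x⟩ := nonempty_of_isDensityMatrix_cqApply hσ0
      exact ⟨_, replacementChannel (ρ' x), isCPTP_replacementChannel (hρ' x), rfl⟩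
  · intro h
    by_contra hno
    obtain ⟨W0, W1, u, hW0, hW1, hlt, hgt⟩ :=
      exists_separating_isHermitian p0 p1 hσ0.1.1 hσ1.1.1 hno
    refine absurd (h n W0 W1 hW0 hW1) <| not_le.mpr <|
      (csSup_le ?_ ?_).trans_lt (hgt.trans_le (le_csSup (bddAbove_setOf_isCPTP hσ0 hσ1 W0 W1) ?_))
    · exact ⟨_, fun _ => σ0, fun _ => hσ0, rfl⟩
    · rintro v ⟨ρ, hρ, rfl⟩
      rw [← re_trace_mul_cqApply, ← re_trace_mul_cqApply]
      exact (hlt ρ hρ).le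
    · exact ⟨LinearMap.id, isCPTP_id, rfl⟩

/-- (Quantum randomization criterion.) A classical-to-quantum
channel `Γ` with `Γ(p0) = σ0`, `Γ(p1) = σ1` exists iff for every pair of
Hermitian matrices `(W0, W1)` the classical optimal gain dominates the quantum
optimal gain over CPTP post-processings. -/
theorem cq_channel_exists_iff_randomization {X : Type*} [Fintype X] {n : ℕ}
    (p0 p1 : X → ℝ) (hp0 : ProbVec p0) (hp1 : ProbVec p1)
    (σ0 σ1 : Matrix (Fin n) (Fin n) ℂ)
    (hσ0 : IsDensityMatrix σ0) (hσ1 : IsDensityMatrix σ1) :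
    (∃ ρ : X → Matrix (Fin n) (Fin n) ℂ, (∀ x, IsDensityMatrix (ρ x)) ∧
        cqApply ρ p0 = σ0 ∧ cqApply ρ p1 = σ1) ↔
      ∀ (k : ℕ) (W0 W1 : Matrix (Fin k) (Fin k) ℂ),
        W0.IsHermitian → W1.IsHermitian →
        sSup {v : ℝ | ∃ Λ : Matrix (Fin n) (Fin n) ℂ →ₗ[ℂ] Matrix (Fin k) (Fin k) ℂ,
            IsCPTP Λ ∧ v = (W0 * Λ σ0).trace.re + (W1 * Λ σ1).trace.re} ≤
          sSup {v : ℝ | ∃ ρ : X → Matrix (Fin k) (Fin k) ℂ,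
            (∀ x, IsDensityMatrix (ρ x)) ∧
            v = (∑ x, p0 x * (W0 * ρ x).trace.re) +
              (∑ x, p1 x * (W1 * ρ x).trace.re)} :=
  cq_channel_exists_iff_randomization_general p0 p1 σ0 σ1 hσ0 hσ1
end
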